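/- arXiv:1601.01508 — 2 statements merged into one kernel-verified Lean document; each statement's English description precedes it below -/
import Mathlib

section
/- Let k be a field of characteristic zero and let 1 ≤ m ≤ n. Suppose that for all polynomials f_1,…,f_m ∈ k[x_1,…,x_n], if dgcd(f_1,…,f_m) is a nonzero element of k then the subalgebra k[f_1,…,f_m] is algebraically closed in k[x_1,…,x_n]. Then the Jacobian Conjecture holds in m variables over k: for all polynomials g_1,…,g_m ∈ k[x_1,…,x_m], if the Jacobian determinant jac(g_1,…,g_m) = det(∂g_j/∂x_l) is a nonzero element of k, then k[g_1,…,g_m] = k[x_1,…,x_m]. -/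
/-!
Renaming the variables of `k[x₁, …, x_m]` into `k[x₁, …, x_n]` does not change the Jacobian
determinant, so the image `f` of `g` has a nonzero constant as `dgcd`, and `k[f]` is algebraically
closed. A nonzero Jacobian determinant makes `g` algebraically independent: for a relation
`P(g) = 0` of minimal degree, the chain rule and the nonsingularity of the Jacobian matrix give
the relations `∂ⱼP(g) = 0` of lower degree, so `P` is constant. Hence `g` is a transcendence
basis of `k[x₁, …, x_m]`, every `xᵢ` is algebraic over `k[g]`, its image is algebraic over
`k[f]` and thus lies in `k[f]`, so `xᵢ ∈ k[g]`.
-/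

open MvPolynomial

/-- The Jacobian determinant of `f₁, …, f_m` with respect to the variables
`x_{i 1}, …, x_{i m}`. -/
noncomputable def jacDet {k : Type*} [Field k] {m n : ℕ}
    (f : Fin m → MvPolynomial (Fin n) k) (i : Fin m → Fin n) : MvPolynomial (Fin n) k :=
  Matrix.det (Matrix.of fun j l => pderiv (i l) (f j))

/-- `d` is a greatest common divisor (in the UFD `k[x₁,…,xₙ]`) of all Jacobian
determinants `jac^{f₁,…,f_m}_{x_{i₁},…,x_{i_m}}`, `1 ≤ i₁ < … < i_m ≤ n`;
strictly increasing sequences `i₁ < … < i_m` are encoded as strictly monotone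
maps `Fin m → Fin n`.  (Note that this forces `d = 0` when all the Jacobian
determinants vanish.) -/
def IsDgcd {k : Type*} [Field k] {m n : ℕ}
    (f : Fin m → MvPolynomial (Fin n) k) (d : MvPolynomial (Fin n) k) : Prop :=
  (∀ i : Fin m → Fin n, StrictMono i → d ∣ jacDet f i) ∧
  ∀ e : MvPolynomial (Fin n) k, (∀ i : Fin m → Fin n, StrictMono i → e ∣ jacDet f i) → e ∣ d

/-- A subalgebra `R` of a domain `A` is algebraically closed in `A` if every element
of `A` algebraic over `R` (equivalently, over the field of fractions of `R`)
belongs to `R`. -/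
def AlgClosedIn {k A : Type*} [Field k] [CommRing A] [Algebra k A]
    (R : Subalgebra k A) : Prop :=
  ∀ a : A, IsAlgebraic R a → a ∈ R

theorem Derivation.map_aeval_mvPolynomial {R A M ι : Type*} [CommSemiring R] [CommSemiring A]
    [Algebra R A] [AddCommMonoid M] [Module A M] [Module R M] [IsScalarTower R A M] [Fintype ι]
    (D : Derivation R A M) (g : ι → A) (p : MvPolynomial ι R) :
    D (aeval g p) = ∑ j, aeval g (pderiv j p) • D (g j) := by
  classical
  induction p using MvPolynomial.induction_on with
  | C a => simp
  | add p q hp hq => simp only [map_add, hp, hq, add_smul, Finset.sum_add_distrib]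
  | mul_X p j hp =>
    simp [Derivation.leibniz, hp, pderiv_X, Pi.single_apply, apply_ite, ite_smul, add_smul,
      mul_smul, Finset.sum_add_distrib, Finset.smul_sum]

namespace MvPolynomial
variable {R σ : Type*}

theorem totalDegree_pderiv_lt [CommSemiring R] {i : σ} {p : MvPolynomial σ R}
    (h : pderiv i p ≠ 0) : (pderiv i p).totalDegree < p.totalDegree := by
  obtain ⟨t, ht, hsup⟩ := Finset.exists_mem_eq_sup _ (support_nonempty.2 h)
    fun s : σ →₀ ℕ => s.degree
  have hmem : t + Finsupp.single i 1 ∈ p.support := by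
    rw [mem_support_iff, coeff_pderiv] at ht
    exact mem_support_iff.2 (left_ne_zero_of_mul ht)
  calc (pderiv i p).totalDegree = t.degree := hsup
    _ < (t + Finsupp.single i 1).degree := by simp
    _ ≤ p.totalDegree := le_totalDegree hmem

theorem eq_C_of_forall_pderiv_eq_zero [CommSemiring R] [NoZeroDivisors R] [CharZero R]
    {p : MvPolynomial σ R} (h : ∀ i, pderiv i p = 0) : p = C (coeff 0 p) := by
  classical
  ext s
  rw [coeff_C]
  split_ifs with hs
  · rw [hs]
  obtain ⟨i, hi⟩ : ∃ i, s i ≠ 0 := by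
    by_contra! h0
    exact hs (Finsupp.ext h0).symm
  have hle : Finsupp.single i 1 ≤ s := Finsupp.single_le_iff.2 (Nat.one_le_iff_ne_zero.2 hi)
  have := coeff_pderiv (i := i) p (s - Finsupp.single i 1)
  rw [h i, coeff_zero, tsub_add_cancel_of_le hle, eq_comm] at this
  exact (mul_eq_zero.1 this).resolve_right (Nat.cast_add_one_ne_zero _)

theorem algebraicIndependent_of_det_pderiv_ne_zero [CommRing R] [IsDomain R] [CharZero R]
    [Fintype σ] [DecidableEq σ] {g : σ → MvPolynomial σ R}
    (hg : (Matrix.of fun j l => pderiv l (g j)).det ≠ 0) : AlgebraicIndependent R g := by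
  rw [algebraicIndependent_iff]
  intro p
  induction hN : p.totalDegree using Nat.strong_induction_on generalizing p with
  | _ N ih =>
  intro hp
  have hvecMul : Matrix.vecMul (fun j => aeval g (pderiv j p))
      (Matrix.of fun j l => pderiv l (g j)) = 0 := by
    funext l
    have hchain := (pderiv l).map_aeval_mvPolynomial g p
    rw [hp, map_zero] at hchain
    simpa [Matrix.vecMul, dotProduct] using hchain.symm
  have haeval : ∀ j, aeval g (pderiv j p) = 0 := by
    by_contra! h
    exact hg (Matrix.exists_vecMul_eq_zero_iff.1 ⟨_, Function.ne_iff.2 h, hvecMul⟩)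
  have hpderiv : ∀ j, pderiv j p = 0 := by
    intro j
    by_contra hj
    exact hj (ih _ (hN ▸ totalDegree_pderiv_lt hj) _ rfl (haeval j))
  rw [eq_C_of_forall_pderiv_eq_zero hpderiv, aeval_C, algebraMap_eq, C_eq_zero] at hp
  rw [eq_C_of_forall_pderiv_eq_zero hpderiv, hp, C_0]

theorem isAlgebraic_adjoin_of_det_pderiv_ne_zero [CommRing R] [IsDomain R] [CharZero R]
    [Fintype σ] [DecidableEq σ] {g : σ → MvPolynomial σ R}
    (hg : (Matrix.of fun j l => pderiv l (g j)).det ≠ 0) :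
    Algebra.IsAlgebraic (Algebra.adjoin R (Set.range g)) (MvPolynomial σ R) :=
  ((algebraicIndependent_of_det_pderiv_ne_zero hg).isTranscendenceBasis_of_lift_trdeg_le_of_finite
    (by simp)).isAlgebraic

end MvPolynomial

theorem IsAlgebraic.map_of_injective {R A B : Type*} [CommRing R] [CommRing A] [CommRing B]
    [Algebra R A] [Algebra R B] {S : Subalgebra R A} {a : A} (h : IsAlgebraic S a)
    (f : A →ₐ[R] B) (hf : Function.Injective f) : IsAlgebraic (S.map f) (f a) :=
  h.ringHom_of_comp_eq (S.equivMapOfInjective f hf) f (S.equivMapOfInjective f hf).injective rfl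

theorem jacDet_rename {k : Type*} [Field k] {m n : ℕ} {e : Fin m → Fin n}
    (he : Function.Injective e) (g : Fin m → MvPolynomial (Fin m) k) :
    jacDet (fun j => rename e (g j)) e = rename e (Matrix.of fun j l => pderiv l (g j)).det := by
  rw [jacDet, ← AlgHom.coe_toRingHom, RingHom.map_det]
  exact congrArg Matrix.det (Matrix.ext fun j l => pderiv_rename he l (g j))

theorem isDgcd_C_of_jacDet_eq_C {k : Type*} [Field k] {m n : ℕ}
    {f : Fin m → MvPolynomial (Fin n) k} {i : Fin m → Fin n} (hi : StrictMono i) {c : k}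
    (hc : c ≠ 0) (h : jacDet f i = C c) : IsDgcd f (C c) :=
  ⟨fun _ _ => ((isUnit_iff_ne_zero.2 hc).map C).dvd, fun _ he => h ▸ he i hi⟩

theorem statement10_general {k : Type*} [Field k] [CharZero k] {m n : ℕ}
    (hmn : m ≤ n)
    (H : ∀ f : Fin m → MvPolynomial (Fin n) k,
      (∃ c : k, c ≠ 0 ∧ IsDgcd f (C c)) →
      AlgClosedIn (Algebra.adjoin k (Set.range f))) :
    ∀ g : Fin m → MvPolynomial (Fin m) k,
      (∃ c : k, c ≠ 0 ∧
        Matrix.det (Matrix.of fun j l => pderiv l (g j)) = C c) →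
      Algebra.adjoin k (Set.range g) = ⊤ := by
  rintro g ⟨c, hc, hdet⟩
  set φ : MvPolynomial (Fin m) k →ₐ[k] MvPolynomial (Fin n) k := rename (Fin.castLE hmn)
  have hφ : Function.Injective φ := rename_injective _ (Fin.castLE_injective hmn)
  have hjac : jacDet (fun j => φ (g j)) (Fin.castLE hmn) = C c := by
    rw [jacDet_rename (Fin.castLE_injective hmn), hdet, rename_C]
  have hclosed := H _ ⟨c, hc, isDgcd_C_of_jacDet_eq_C (Fin.strictMono_castLE hmn) hc hjac⟩
  rw [Set.range_comp' φ g, ← AlgHom.map_adjoin] at hclosed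
  have halg := isAlgebraic_adjoin_of_det_pderiv_ne_zero (hdet ▸ C_ne_zero.2 hc)
  rw [eq_top_iff, ← adjoin_range_X, Algebra.adjoin_le_iff]
  rintro _ ⟨i, rfl⟩
  obtain ⟨x, hx, hxX⟩ := hclosed _ ((halg.isAlgebraic (X i)).map_of_injective φ hφ)
  rwa [← hφ hxX]

/-- Lemma 2: the conjecture `JC(m,n,k)` (with the conclusion strengthened, via
Nowicki'"'"'s theorem, to algebraic closedness of `k[f₁,…,f_m]`) implies the
Jacobian Conjecture in `m` variables over `k`. -/
theorem statement10 {k : Type*} [Field k] [CharZero k] {m n : ℕ}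
    (hm : 1 ≤ m) (hmn : m ≤ n)
    (H : ∀ f : Fin m → MvPolynomial (Fin n) k,
      (∃ c : k, c ≠ 0 ∧ IsDgcd f (C c)) →
      AlgClosedIn (Algebra.adjoin k (Set.range f))) :
    ∀ g : Fin m → MvPolynomial (Fin m) k,
      (∃ c : k, c ≠ 0 ∧
        Matrix.det (Matrix.of fun j l => pderiv l (g j)) = C c) →
      Algebra.adjoin k (Set.range g) = ⊤ :=
  statement10_general hmn H
end

section
/- Let A be a unique factorization domain and let R be a subring of A such that the invertible elements of R coincide with the invertible elements of A (equivalently, every unit of A lies in R and is a unit of R, and every non-unit of R is a non-unit of A) and such that R_0 ∩ A = R. Then the following conditions are equivalent: (i) every square-free element of R is square-free in A; (ii) R is square-factorially closed in A, i.e., for every x ∈ A and every y ∈ A square-free in A, if x²y ∈ R∖{0}, then x ∈ R and y ∈ R. -/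
/-!
Both directions rest on the decomposition of a nonzero element as `x ^ 2 * y` with `y`
square-free, which exists in any monoid where strict divisibility is well founded, and is
unique up to associates in a UFD (compare multiplicities of normalized prime factors).
Since `R` and `A` have the same units, strict divisibility in `R` is strict divisibility in `A`,
so decompositions also exist inside `R`. For (i) ⇒ (ii), decompose `x ^ 2 * y = b ^ 2 * c`
in `R`; by (i) `c` is square-free in `A`, so `x`, `y` differ from `b`, `c` by units of `A`,
which lie in `R`. For (ii) ⇒ (i), decompose `r = x ^ 2 * y` in `A`; by (ii) this is a
decomposition in `R`, so `x` is a unit when `r` is square-free in `R`.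
-/

open UniqueFactorizationMonoid

theorem WfDvdMonoid.of_injective {M N F : Type*} [CommMonoidWithZero M] [CommMonoidWithZero N]
    [WfDvdMonoid N] [FunLike F M N] [MonoidWithZeroHomClass F M N] (f : F)
    (hf : Function.Injective f) (hunit : ∀ a, IsUnit (f a) → IsUnit a) : WfDvdMonoid M :=
  ⟨(InvImage.wf f wellFounded_dvdNotUnit).mono fun _ _ ⟨ha, x, hx, hb⟩ =>
    ⟨(map_ne_zero_iff f hf).mpr ha, f x, fun h => hx (hunit x h), by rw [hb, map_mul]⟩⟩

theorem WfDvdMonoid.exists_sq_mul_squarefree {M : Type*} [CommMonoidWithZero M] [WfDvdMonoid M]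
    {a : M} (ha : a ≠ 0) : ∃ x y : M, x ^ 2 * y = a ∧ Squarefree y := by
  induction a using (wellFounded_dvdNotUnit (α := M)).induction with | h a ih
  by_cases hsq : Squarefree a
  · exact ⟨1, a, by simp, hsq⟩
  obtain ⟨z, ⟨w, rfl⟩, hz⟩ : ∃ z, z * z ∣ a ∧ ¬IsUnit z := by simpa [Squarefree] using hsq
  have hw : w ≠ 0 := right_ne_zero_of_mul ha
  obtain ⟨x, y, rfl, hy⟩ :=
    ih w ⟨hw, z * z, fun h => hz (isUnit_of_mul_isUnit_left h), mul_comm _ _⟩ hw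
  exact ⟨z * x, y, by simp only [sq]; ac_rfl, hy⟩

theorem associated_of_sq_mul_squarefree_eq {A : Type*} [CommMonoidWithZero A]
    [UniqueFactorizationMonoid A] {x y b c : A} (h : x ^ 2 * y = b ^ 2 * c) (h0 : x ^ 2 * y ≠ 0)
    (hy : Squarefree y) (hc : Squarefree c) : Associated x b ∧ Associated y c := by
  classical
  let _ := UniqueFactorizationMonoid.strongNormalizationMonoid (α := A)
  have h0' : b ^ 2 * c ≠ 0 := h ▸ h0
  have hx := ne_zero_pow two_ne_zero (left_ne_zero_of_mul h0)
  have hb := ne_zero_pow two_ne_zero (left_ne_zero_of_mul h0')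
  have hcount : ∀ p, (normalizedFactors x).count p = (normalizedFactors b).count p := by
    intro p
    have hp := congrArg (fun a => (normalizedFactors a).count p) h
    have hyp := Multiset.nodup_iff_count_le_one.mp
      ((squarefree_iff_nodup_normalizedFactors (right_ne_zero_of_mul h0)).mp hy) p
    have hcp := Multiset.nodup_iff_count_le_one.mp
      ((squarefree_iff_nodup_normalizedFactors (right_ne_zero_of_mul h0')).mp hc) p
    simp only [normalizedFactors_mul (pow_ne_zero 2 hx) (right_ne_zero_of_mul h0),
      normalizedFactors_mul (pow_ne_zero 2 hb) (right_ne_zero_of_mul h0'), normalizedFactors_pow,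
      Multiset.count_add, Multiset.count_nsmul] at hp
    omega
  have hxb : Associated x b :=
    (associated_iff_normalizedFactors_eq_normalizedFactors hx hb).mpr (Multiset.ext.mpr hcount)
  refine ⟨hxb, ?_⟩
  obtain ⟨u, rfl⟩ := hxb
  have hyc : y = (u ^ 2 : Aˣ) * c := by
    refine mul_left_cancel₀ (pow_ne_zero 2 hx) ?_
    rw [h, Units.val_pow_eq_pow_val]
    simp only [sq]; ac_rfl
  exact hyc ▸ associated_unit_mul_left c _ (Units.isUnit _)

theorem Subring.mem_of_associated {A : Type*} [CommRing A] {R : Subring A}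
    (hR : ∀ u : Aˣ, (u : A) ∈ R) {a b : A} (h : Associated a b) (ha : a ∈ R) : b ∈ R := by
  obtain ⟨u, rfl⟩ := h
  exact R.mul_mem ha (hR u)

theorem statement16_general {A : Type*} [CommRing A] [IsDomain A] [UniqueFactorizationMonoid A]
    (R : Subring A)
    (hu : ∀ a : A, IsUnit a ↔ ∃ u : R, IsUnit u ∧ (u : A) = a) :
    (∀ r : R, Squarefree r → Squarefree (r : A)) ↔
    (∀ x y : A, Squarefree y → x ^ 2 * y ∈ R → x ^ 2 * y ≠ 0 → x ∈ R ∧ y ∈ R) := by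
  have hunits : ∀ u : Aˣ, (u : A) ∈ R := fun u => by
    obtain ⟨w, -, hw⟩ := (hu u).mp u.isUnit
    exact hw ▸ w.2
  have hreflect : ∀ r : R, IsUnit (R.subtype r) → IsUnit r := fun r hr => by
    obtain ⟨w, hw, hwr⟩ := (hu r).mp hr
    rwa [← Subtype.ext hwr]
  have : WfDvdMonoid R := WfDvdMonoid.of_injective R.subtype Subtype.val_injective hreflect
  constructor
  · intro hi x y hy hmem h0
    obtain ⟨b, c, hbc, hc⟩ :=
      WfDvdMonoid.exists_sq_mul_squarefree (a := (⟨x ^ 2 * y, hmem⟩ : R)) (by simpa using h0)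
    obtain ⟨hxb, hyc⟩ := associated_of_sq_mul_squarefree_eq (b := (b : A)) (c := c)
      (congrArg Subtype.val hbc).symm h0 hy (hi c hc)
    exact ⟨R.mem_of_associated hunits hxb.symm b.2, R.mem_of_associated hunits hyc.symm c.2⟩
  · intro hii r hr
    have hr0 : (r : A) ≠ 0 := by simpa using hr.ne_zero
    obtain ⟨x, y, hxy, hy⟩ := WfDvdMonoid.exists_sq_mul_squarefree hr0
    obtain ⟨hx, hyR⟩ := hii x y hy (hxy ▸ r.2) (hxy ▸ hr0)
    have hxu : IsUnit (⟨x, hx⟩ : R) :=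
      hr _ ⟨⟨y, hyR⟩, Subtype.ext (by simp [← hxy, sq, mul_assoc])⟩
    rw [← hxy]
    exact (associated_unit_mul_left y _ ((hxu.map R.subtype).pow 2)).squarefree_iff.mpr hy

/-- Theorem 3: let `A` be a UFD and `R` a subring of `A` whose invertible
elements are exactly the invertible elements of `A` and with `R₀ ∩ A = R`.
Then every square-free element of `R` is square-free in `A` iff `R` is
square-factorially closed in `A`: for every `x ∈ A` and square-free `y ∈ A`,
`x²y ∈ R ∖ {0}` implies `x, y ∈ R`. -/
theorem statement16 {A : Type*} [CommRing A] [IsDomain A] [UniqueFactorizationMonoid A]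
    (R : Subring A)
    (hu : ∀ a : A, IsUnit a ↔ ∃ u : R, IsUnit u ∧ (u : A) = a)
    (hfr : ∀ a : A, (∃ r s : R, (s : A) ≠ 0 ∧ a * (s : A) = (r : A)) → a ∈ R) :
    (∀ r : R, Squarefree r → Squarefree (r : A)) ↔
    (∀ x y : A, Squarefree y → x ^ 2 * y ∈ R → x ^ 2 * y ≠ 0 → x ∈ R ∧ y ∈ R) :=
  statement16_general R hu
end
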